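/- Let κ be a regular cardinal and μ a (κ,κ⁺)-cardinal, and let m : [κ⁺]² → κ be the μ-coloring m(α,β) = min{rank(X) : α, β ∈ X ∈ μ}. Then for all α < β < γ < κ⁺ and ν < κ: (a) |{ξ < α : m(ξ,α) ≤ ν}| < κ; (b) m(α,γ) ≤ max{m(α,β), m(β,γ)}; (c) m(α,β) ≤ max{m(α,γ), m(β,γ)}. -/

import Mathlib

/-!
The heart of the matter is coherence: two members `X, Y` of `μ` of the same rank agree below
every common point `b`, i.e. `X ∩ b = Y ∩ b`. This is proved by induction on a common superset
`Z`. If `Z` is locally directed, `X` and `Y` fit into a smaller common superset. If `Z = X₁ * X₂`,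
the transfer map `X₁ → X₂` fixes the common initial segment `X₁ ∩ X₂`, and by homogeneity it
carries the members of `μ` below `X₁` onto those below `X₂` preserving rank, so the question
moves inside `X₁`.

Coherence makes `μ_ξ(α) = X ∩ α` independent of `X`, so the fibre `{ξ < α | m(ξ,α) ≤ ν}` lies in
`⋃_{ξ ≤ ν} μ_ξ(α)`, fewer than `κ` sets of size `< κ`. For subadditivity, given `a < b` in `X` and
`b ∈ Y`, take `W` of the rank of `X` with `b ∈ W` and `W ⊆ Y` or `Y ⊆ W` (every intermediate
rank is attained, by neatness and local almost directedness); coherence puts `a` into `W`, so `a`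
and `Y` lie in a member of `μ` of rank at most `max (rank X) (rank Y)`.
-/

open Set Cardinal Ordinal

noncomputable section

/-- Lower a (small) ordinal of `Ordinal.{1}` to `Ordinal.{0}` (the inverse of `Ordinal.lift`
on its range). -/
noncomputable def olower (o : Ordinal.{1}) : Ordinal.{0} :=
  sInf {a : Ordinal.{0} | Ordinal.lift.{1} a = o}

/-- The order type of a set of ordinals. -/
noncomputable def otp (A : Set Ordinal.{0}) : Ordinal.{0} :=
  olower (Ordinal.type (Subrel ((· < ·) : Ordinal → Ordinal → Prop) (· ∈ A)))

/-- The canonical order-preserving transfer map from a set of ordinals `X` to a set of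
ordinals `Y` of the same order type: an element `a ∈ X` is sent to the unique element of `Y`
occupying the same position. -/
noncomputable def omap (X Y : Set Ordinal) (a : Ordinal) : Ordinal :=
  sInf {b | b ∈ Y ∧ otp (Y ∩ Set.Iio b) = otp (X ∩ Set.Iio a)}

/-- `IsStar X₁ X₂ X` says `X = X₁ * X₂`: `X₁` and `X₂` have the same order type,
`X = X₁ ∪ X₂`, and `X₁ ∩ X₂ < X₁ \ X₂ < X₂ \ X₁` elementwise. -/
def IsStar (X₁ X₂ X : Set Ordinal) : Prop :=
  otp X₁ = otp X₂ ∧ X = X₁ ∪ X₂ ∧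
  (∀ a ∈ X₁ ∩ X₂, ∀ b ∈ X₁ \ X₂, a < b) ∧
  (∀ b ∈ X₁ \ X₂, ∀ c ∈ X₂ \ X₁, b < c)

set_option linter.deprecated false in
/-- A `(κ,κ⁺)`-cardinal (a neat simplified `(κ,1)`-morass presented as a family of sets):
a family `μ ⊆ ℘_κ(κ⁺)` which is well-founded under strict inclusion, locally small,
homogeneous, directed, locally almost directed, covers `κ⁺` and is neat. -/
structure TwoCardinal (κ : Cardinal.{0}) where
  mu : Set (Set Ordinal)
  mem_sub : ∀ X ∈ mu, X ⊆ Set.Iio (Order.succ κ).ord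
  mem_small : ∀ X ∈ mu, (otp X).card < κ
  wf : WellFounded fun X Y : mu => (X : Set Ordinal) ⊂ (Y : Set Ordinal)
  locSmall : ∀ X : mu,
    #{Z : mu // (Z : Set Ordinal) ⊂ (X : Set Ordinal)} < Cardinal.lift.{1} κ
  homog : ∀ X Y : mu, @IsWellFounded.rank _ _ ⟨wf⟩ X = @IsWellFounded.rank _ _ ⟨wf⟩ Y →
    otp (X : Set Ordinal) = otp (Y : Set Ordinal) ∧
    {Z | Z ∈ mu ∧ Z ⊂ (Y : Set Ordinal)} =
      (fun Z => omap (X : Set Ordinal) (Y : Set Ordinal) '' Z) ''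
        {Z | Z ∈ mu ∧ Z ⊂ (X : Set Ordinal)}
  directed : ∀ X ∈ mu, ∀ Y ∈ mu, ∃ Z ∈ mu, X ⊆ Z ∧ Y ⊆ Z
  locAlmostDirected : ∀ X : mu,
    (∀ Z₁ ∈ mu, ∀ Z₂ ∈ mu, Z₁ ⊂ (X : Set Ordinal) → Z₂ ⊂ (X : Set Ordinal) →
      ∃ Z ∈ mu, Z ⊂ (X : Set Ordinal) ∧ Z₁ ⊆ Z ∧ Z₂ ⊆ Z) ∨
    (∃ X₁ X₂ : mu, @IsWellFounded.rank _ _ ⟨wf⟩ X₁ = @IsWellFounded.rank _ _ ⟨wf⟩ X₂ ∧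
      IsStar (X₁ : Set Ordinal) (X₂ : Set Ordinal) (X : Set Ordinal) ∧
      {Z | Z ∈ mu ∧ Z ⊂ (X : Set Ordinal)} =
        {Z | Z ∈ mu ∧ Z ⊂ (X₁ : Set Ordinal)} ∪ {Z | Z ∈ mu ∧ Z ⊂ (X₂ : Set Ordinal)} ∪
          {(X₁ : Set Ordinal), (X₂ : Set Ordinal)})
  covers : ⋃₀ mu = Set.Iio (Order.succ κ).ord
  neat : ∀ X : mu, @IsWellFounded.rank _ _ ⟨wf⟩ X ≠ 0 →
    (X : Set Ordinal) = ⋃₀ {Z | Z ∈ mu ∧ Z ⊂ (X : Set Ordinal)}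

namespace TwoCardinal

variable {κ : Cardinal} (M : TwoCardinal κ)

set_option linter.deprecated false in
/-- The rank of an element of `μ` in the well-founded order `(μ, ⊂)`. -/
noncomputable def rank (X : M.mu) : Ordinal := olower (@IsWellFounded.rank _ _ ⟨M.wf⟩ X)

/-- The height of the well-founded order `(μ, ⊂)`. -/
noncomputable def ht : Ordinal := sSup (Set.range fun X : M.mu => M.rank X + 1)

/-- The term `μ_ξ(α)` of the μ-sequence at `α`: equal to `X ∩ α` for any `X ∈ μ` of
rank `ξ` containing `α` (this is independent of the choice of `X`). -/
noncomputable def seq (α ξ : Ordinal) : Set Ordinal :=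
  ⋃₀ {S | ∃ X : M.mu, M.rank X = ξ ∧ α ∈ (X : Set Ordinal) ∧
    S = (X : Set Ordinal) ∩ Set.Iio α}

/-- The μ-coloring `m(α,β) = min{rank X : α, β ∈ X ∈ μ}`. -/
noncomputable def mcol (a b : Ordinal) : Ordinal :=
  sInf {ξ | ∃ X : M.mu, M.rank X = ξ ∧ a ∈ (X : Set Ordinal) ∧ b ∈ (X : Set Ordinal)}

end TwoCardinal

section OrderType

variable {A B : Set Ordinal.{0}} {a c : Ordinal.{0}}

theorem olower_lift (a : Ordinal.{0}) : olower (Ordinal.lift.{1} a) = a :=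
  le_antisymm (csInf_le' rfl) (le_csInf ⟨a, rfl⟩ fun _ hb => Ordinal.lift_le.mp hb.ge)

theorem lift_otp (hA : BddAbove A) :
    Ordinal.lift.{1} (otp A) = Ordinal.type (Subrel (α := Ordinal) (· < ·) (· ∈ A)) := by
  obtain ⟨o, ho⟩ := hA
  have hle : Ordinal.type (Subrel (α := Ordinal) (· < ·) (· ∈ A)) ≤
      Ordinal.lift.{1} (Order.succ o) := by
    rw [← Ordinal.type_lt_Iio]
    exact (Subrel.inclusionEmbedding _ fun x hx => Order.lt_succ_of_le (ho hx)).ordinal_type_le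
  obtain ⟨b, hb⟩ := Ordinal.mem_range_lift_of_le hle
  rw [otp, ← hb, olower_lift]

theorem lift_card_otp (hA : BddAbove A) : Cardinal.lift.{1} (otp A).card = #A := by
  rw [Ordinal.lift_card, lift_otp hA, Ordinal.card_type]

theorem lift_otp_inter_Iio (ha : a ∈ A) :
    Ordinal.lift.{1} (otp (A ∩ Iio a)) =
      Ordinal.typein (Subrel (α := Ordinal) (· < ·) (· ∈ A)) ⟨a, ha⟩ := by
  rw [lift_otp ⟨a, fun _ hx => hx.2.le⟩, ← Ordinal.type_subrel]
  exact Ordinal.type_eq.2 ⟨{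
    toFun := fun x => ⟨⟨x.1, x.2.1⟩, x.2.2⟩
    invFun := fun x => ⟨x.1.1, x.1.2, x.2⟩
    map_rel_iff' := Iff.rfl }⟩

theorem eq_of_otp_inter_Iio_eq {a' : Ordinal} (ha : a ∈ A) (ha' : a' ∈ A)
    (h : otp (A ∩ Iio a) = otp (A ∩ Iio a')) : a = a' := by
  have := congrArg (Ordinal.lift.{1}) h
  rw [lift_otp_inter_Iio ha, lift_otp_inter_Iio ha', Ordinal.typein_inj] at this
  exact congrArg Subtype.val this

theorem omap_spec (hA : BddAbove A) (hB : BddAbove B) (hAB : otp A = otp B) (ha : a ∈ A) :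
    omap A B a ∈ B ∧ otp (B ∩ Iio (omap A B a)) = otp (A ∩ Iio a) := by
  rw [← Ordinal.lift_inj, lift_otp hA, lift_otp hB] at hAB
  obtain ⟨f⟩ := Ordinal.type_eq.1 hAB
  refine csInf_mem (s := {b | b ∈ B ∧ otp (B ∩ Iio b) = otp (A ∩ Iio a)})
    ⟨(f ⟨a, ha⟩).1, (f ⟨a, ha⟩).2, ?_⟩
  rw [← Ordinal.lift_inj, lift_otp_inter_Iio (f ⟨a, ha⟩).2, lift_otp_inter_Iio ha]
  exact Ordinal.typein_apply f.toInitialSeg ⟨a, ha⟩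

theorem omap_injOn (hA : BddAbove A) (hB : BddAbove B) (hAB : otp A = otp B) :
    InjOn (omap A B) A := fun a ha a' ha' h => by
  have hpos := (omap_spec hA hB hAB ha).2
  rw [h, (omap_spec hA hB hAB ha').2] at hpos
  exact eq_of_otp_inter_Iio_eq ha ha' hpos.symm

theorem omap_eq_self (hcB : c ∈ B) (h : A ∩ Iio c = B ∩ Iio c) :
    omap A B c = c :=
  le_antisymm (csInf_le' ⟨hcB, by rw [h]⟩) <| le_csInf ⟨c, hcB, by rw [h]⟩ fun b ⟨hbB, hb⟩ =>
    (eq_of_otp_inter_Iio_eq hbB hcB (hb.trans (by rw [h]))).ge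

theorem IsStar.inter_Iio_eq {X₁ X₂ X : Set Ordinal} (h : IsStar X₁ X₂ X)
    (hne : (X₁ \ X₂).Nonempty) {b : Ordinal} (hb : b ∈ X₁ ∩ X₂) :
    X₁ ∩ Iio b = X₂ ∩ Iio b := by
  obtain ⟨-, -, hlow, hmid⟩ := h
  obtain ⟨d, hd⟩ := hne
  ext c
  refine ⟨fun ⟨hc1, hcb⟩ => ⟨?_, hcb⟩, fun ⟨hc2, hcb⟩ => ⟨?_, hcb⟩⟩
  · by_contra hc2
    exact (hlow b hb c ⟨hc1, hc2⟩).not_gt hcb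
  · by_contra hc1
    exact ((hlow b hb d hd).trans (hmid d hd c ⟨hc2, hc1⟩)).not_gt hcb

end OrderType

namespace TwoCardinal

variable {κ : Cardinal} (M : TwoCardinal κ)

-- `M.rank` lowers this rank to `Ordinal.{0}`; by `lift_rank` nothing is lost when `κ` is regular.
noncomputable abbrev wfRank (X : M.mu) : Ordinal.{1} := @IsWellFounded.rank _ _ ⟨M.wf⟩ X

variable {M}

theorem wfRank_lt {X Y : M.mu} (h : (X : Set Ordinal) ⊂ Y) : M.wfRank X < M.wfRank Y :=
  IsWellFounded.rank_lt_of_rel (hwf := ⟨M.wf⟩) h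

theorem wfRank_mono {X Y : M.mu} (h : (X : Set Ordinal) ⊆ Y) : M.wfRank X ≤ M.wfRank Y :=
  h.ssubset_or_eq.elim (fun h => (wfRank_lt h).le) fun h => (congrArg _ (Subtype.ext h)).le

theorem eq_of_subset_of_wfRank_le {X Y : M.mu} (h : (X : Set Ordinal) ⊆ Y)
    (hr : M.wfRank Y ≤ M.wfRank X) : X = Y :=
  Subtype.ext <| h.eq_of_not_ssubset fun hss => (wfRank_lt hss).not_ge hr

theorem wfRank_le_iff {X : M.mu} {o : Ordinal.{1}} :
    M.wfRank X ≤ o ↔ ∀ V : M.mu, (V : Set Ordinal) ⊂ X → M.wfRank V < o := by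
  rw [wfRank, IsWellFounded.rank_eq, Ordinal.iSup_le_iff]
  simp only [Order.succ_le_iff, Subtype.forall]

theorem lt_wfRank_iff {X : M.mu} {o : Ordinal.{1}} :
    o < M.wfRank X ↔ ∃ V : M.mu, (V : Set Ordinal) ⊂ X ∧ o ≤ M.wfRank V := by
  simpa using wfRank_le_iff.not

theorem wfRank_lt_lift_ord (hκ : κ.IsRegular) (X : M.mu) :
    M.wfRank X < Ordinal.lift.{1} κ.ord := by
  induction X using M.wf.induction with | _ X IH => ?_
  rw [wfRank, IsWellFounded.rank_eq]
  simp only [Order.succ_eq_add_one]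
  refine Ordinal.iSup_add_one_lt_of_lt_cof ?_ fun V => IH V.1 V.2
  rw [← Ordinal.lift_cof, hκ.cof_ord]
  exact M.locSmall X

theorem lift_rank (hκ : κ.IsRegular) (X : M.mu) : Ordinal.lift.{1} (M.rank X) = M.wfRank X := by
  obtain ⟨a, ha⟩ := Ordinal.mem_range_lift_of_le (wfRank_lt_lift_ord hκ X).le
  change Ordinal.lift.{1} (olower (M.wfRank X)) = M.wfRank X
  rw [← ha, olower_lift]

theorem rank_eq_rank_iff (hκ : κ.IsRegular) {X Y : M.mu} :
    M.rank X = M.rank Y ↔ M.wfRank X = M.wfRank Y := by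
  rw [← Ordinal.lift_inj, lift_rank hκ, lift_rank hκ]

theorem bddAbove (X : M.mu) : BddAbove (X : Set Ordinal) :=
  ⟨_, fun _ hx => (M.mem_sub X X.2 hx).le⟩

theorem mk_mem_lt (X : M.mu) : #(X : Set Ordinal) < Cardinal.lift.{1} κ := by
  rw [← lift_card_otp (bddAbove X)]
  exact Cardinal.lift_lt.2 (M.mem_small X X.2)

theorem exists_mem {a : Ordinal} (ha : a < (Order.succ κ).ord) :
    ∃ X : M.mu, a ∈ (X : Set Ordinal) := by
  have : a ∈ ⋃₀ M.mu := by rw [M.covers]; exact ha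
  obtain ⟨X, hX, haX⟩ := this
  exact ⟨⟨X, hX⟩, haX⟩

theorem exists_mem_pair {a b : Ordinal} (ha : a < (Order.succ κ).ord)
    (hb : b < (Order.succ κ).ord) :
    ∃ X : M.mu, a ∈ (X : Set Ordinal) ∧ b ∈ (X : Set Ordinal) := by
  obtain ⟨X, haX⟩ := exists_mem ha
  obtain ⟨Y, hbY⟩ := exists_mem hb
  obtain ⟨Z, hZ, hXZ, hYZ⟩ := M.directed X X.2 Y Y.2
  exact ⟨⟨Z, hZ⟩, hXZ haX, hYZ hbY⟩

theorem directed_or_star (X : M.mu) :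
    (∀ Z₁ Z₂ : M.mu, (Z₁ : Set Ordinal) ⊂ X → (Z₂ : Set Ordinal) ⊂ X →
      ∃ Z : M.mu, (Z : Set Ordinal) ⊂ X ∧ (Z₁ : Set Ordinal) ⊆ Z ∧ (Z₂ : Set Ordinal) ⊆ Z) ∨
    ∃ X₁ X₂ : M.mu, M.wfRank X₁ = M.wfRank X₂ ∧ IsStar X₁ X₂ X ∧
      (X₁ : Set Ordinal) ⊂ X ∧ (X₂ : Set Ordinal) ⊂ X ∧
      ∀ W : M.mu, (W : Set Ordinal) ⊂ X →
        (W : Set Ordinal) ⊆ X₁ ∨ (W : Set Ordinal) ⊆ X₂ := by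
  refine (M.locAlmostDirected X).imp (fun h Z₁ Z₂ h₁ h₂ => ?_) fun ⟨X₁, X₂, hr, hstar, hsub⟩ => ?_
  · obtain ⟨Z, hZ, hZX, h₁Z, h₂Z⟩ := h Z₁ Z₁.2 Z₂ Z₂.2 h₁ h₂
    exact ⟨⟨Z, hZ⟩, hZX, h₁Z, h₂Z⟩
  have hX₁ : (X₁ : Set Ordinal) ⊂ X := by
    have : (X₁ : Set Ordinal) ∈ {Z | Z ∈ M.mu ∧ Z ⊂ (X : Set Ordinal)} := by simp [hsub]
    exact this.2
  have hX₂ : (X₂ : Set Ordinal) ⊂ X := by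
    have : (X₂ : Set Ordinal) ∈ {Z | Z ∈ M.mu ∧ Z ⊂ (X : Set Ordinal)} := by simp [hsub]
    exact this.2
  refine ⟨X₁, X₂, hr, hstar, hX₁, hX₂, fun W hW => ?_⟩
  have : (W : Set Ordinal) ∈ {Z | Z ∈ M.mu ∧ Z ⊂ (X : Set Ordinal)} := ⟨W.2, hW⟩
  rw [hsub] at this
  rcases this with (h | h) | h | h
  exacts [Or.inl h.2.subset, Or.inr h.2.subset, Or.inl h.subset,
    Or.inr (mem_singleton_iff.1 h).subset]

theorem exists_ssubset_superset_le_wfRank {Y Z : M.mu} (hYZ : (Y : Set Ordinal) ⊂ Z)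
    {η : Ordinal.{1}} (hη : η < M.wfRank Z) :
    ∃ W : M.mu, (W : Set Ordinal) ⊂ Z ∧ (Y : Set Ordinal) ⊆ W ∧ η ≤ M.wfRank W := by
  rcases M.directed_or_star Z with hdir | ⟨X₁, X₂, hr, -, hX₁, hX₂, hsplit⟩
  · obtain ⟨V, hVZ, hηV⟩ := lt_wfRank_iff.1 hη
    obtain ⟨W, hWZ, hYW, hVW⟩ := hdir Y V hYZ hVZ
    exact ⟨W, hWZ, hYW, hηV.trans (wfRank_mono hVW)⟩
  -- every proper subset of `Z` lies in `X₁` or `X₂`, so `Z` has rank at most `rank X₁ + 1`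
  have hηX₁ : η ≤ M.wfRank X₁ := by
    refine Order.lt_succ_iff.1 (hη.trans_le (wfRank_le_iff.2 fun W hW => ?_))
    refine Order.lt_succ_iff.2 ?_
    rcases hsplit W hW with h | h
    exacts [wfRank_mono h, hr ▸ wfRank_mono h]
  rcases hsplit Y hYZ with h | h
  exacts [⟨X₁, hX₁, h, hηX₁⟩, ⟨X₂, hX₂, h, hr ▸ hηX₁⟩]

theorem exists_wfRank_eq_of_subset {Y Z : M.mu} (hYZ : (Y : Set Ordinal) ⊆ Z)
    {η : Ordinal.{1}} (hYη : M.wfRank Y ≤ η) (hηZ : η ≤ M.wfRank Z) :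
    ∃ W : M.mu, (Y : Set Ordinal) ⊆ W ∧ (W : Set Ordinal) ⊆ Z ∧ M.wfRank W = η := by
  induction Z using M.wf.induction with | _ Z IH => ?_
  rcases hηZ.eq_or_lt with rfl | hηZ
  · exact ⟨Z, hYZ, subset_rfl, rfl⟩
  have hYZ' : (Y : Set Ordinal) ⊂ Z :=
    hYZ.ssubset_of_ne fun h => (hYη.trans_lt hηZ).ne (congrArg _ (Subtype.ext h))
  obtain ⟨V, hVZ, hYV, hηV⟩ := exists_ssubset_superset_le_wfRank hYZ' hηZ
  obtain ⟨W, hYW, hWV, hW⟩ := IH V hVZ hYV hηV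
  exact ⟨W, hYW, hWV.trans hVZ.subset, hW⟩

theorem exists_mem_wfRank_eq_zero {Z : M.mu} {b : Ordinal} (hb : b ∈ (Z : Set Ordinal)) :
    ∃ W : M.mu, (W : Set Ordinal) ⊆ Z ∧ b ∈ (W : Set Ordinal) ∧ M.wfRank W = 0 := by
  induction Z using M.wf.induction with | _ Z IH => ?_
  by_cases h0 : M.wfRank Z = 0
  · exact ⟨Z, subset_rfl, hb, h0⟩
  rw [M.neat Z h0] at hb
  obtain ⟨V, ⟨hV, hVZ⟩, hbV⟩ := hb
  obtain ⟨W, hWV, hbW, hW⟩ := IH ⟨V, hV⟩ hVZ hbV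
  exact ⟨W, hWV.trans hVZ.subset, hbW, hW⟩

theorem exists_mem_wfRank_eq {Z : M.mu} {b : Ordinal} (hb : b ∈ (Z : Set Ordinal))
    {η : Ordinal.{1}} (hη : η ≤ M.wfRank Z) :
    ∃ W : M.mu, (W : Set Ordinal) ⊆ Z ∧ b ∈ (W : Set Ordinal) ∧ M.wfRank W = η := by
  obtain ⟨V, hVZ, hbV, hV⟩ := exists_mem_wfRank_eq_zero hb
  obtain ⟨W, hVW, hWZ, hW⟩ := exists_wfRank_eq_of_subset hVZ (hV ▸ zero_le) hη
  exact ⟨W, hWZ, hVW hbV, hW⟩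

section Homogeneity

variable {X₁ X₂ : M.mu} (hr : M.wfRank X₁ = M.wfRank X₂)
include hr

theorem injOn_omap : InjOn (omap X₁ X₂) X₁ :=
  omap_injOn (bddAbove X₁) (bddAbove X₂) (M.homog X₁ X₂ hr).1

theorem image_omap_mem {W : Set Ordinal} (hW : W ∈ M.mu) (hWX₁ : W ⊂ X₁) :
    omap X₁ X₂ '' W ∈ M.mu ∧ omap X₁ X₂ '' W ⊂ X₂ := by
  have : omap X₁ X₂ '' W ∈ {Z | Z ∈ M.mu ∧ Z ⊂ (X₂ : Set Ordinal)} := by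
    rw [(M.homog X₁ X₂ hr).2]
    exact mem_image_of_mem _ ⟨hW, hWX₁⟩
  exact this

theorem exists_image_omap_eq {V : M.mu} (hV : (V : Set Ordinal) ⊂ X₂) :
    ∃ U : M.mu, (U : Set Ordinal) ⊂ X₁ ∧ omap X₁ X₂ '' U = V := by
  have : (V : Set Ordinal) ∈ {Z | Z ∈ M.mu ∧ Z ⊂ (X₂ : Set Ordinal)} := ⟨V.2, hV⟩
  rw [(M.homog X₁ X₂ hr).2] at this
  obtain ⟨U, ⟨hU, hUX₁⟩, hUV⟩ := this
  exact ⟨⟨U, hU⟩, hUX₁, hUV⟩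

theorem wfRank_image_omap {W W' : M.mu} (hW : (W : Set Ordinal) ⊂ X₁)
    (hW' : (W' : Set Ordinal) = omap X₁ X₂ '' W) : M.wfRank W' = M.wfRank W := by
  induction W using M.wf.induction generalizing W' with | _ W IH => ?_
  have hinj := injOn_omap hr
  have hW'X₂ : (W' : Set Ordinal) ⊂ X₂ := hW' ▸ (image_omap_mem hr W.2 hW).2
  apply le_antisymm
  · refine wfRank_le_iff.2 fun V hVW' => ?_
    obtain ⟨U, hUX₁, hUV⟩ := exists_image_omap_eq hr (hVW'.trans hW'X₂)
    have hUW : (U : Set Ordinal) ⊂ W := by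
      rwa [← hinj.image_ssubset_image_iff hUX₁.subset hW.subset, hUV, ← hW']
    rw [IH U hUW hUX₁ hUV.symm]
    exact wfRank_lt hUW
  · refine wfRank_le_iff.2 fun V hVW => ?_
    have hVX₁ := hVW.trans hW
    let V' : M.mu := ⟨_, (image_omap_mem hr V.2 hVX₁).1⟩
    have hV'W' : (V' : Set Ordinal) ⊂ W' := by
      rw [hW', hinj.image_ssubset_image_iff hVX₁.subset hW.subset]
      exact hVW
    rw [← IH V hVW hVX₁ (W' := V') rfl]
    exact wfRank_lt hV'W'

end Homogeneity

variable (M) in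
def IsCoherentBelow (Z : M.mu) : Prop :=
  ∀ X Y : M.mu, (X : Set Ordinal) ⊆ Z → (Y : Set Ordinal) ⊆ Z → M.wfRank X = M.wfRank Y →
    ∀ b ∈ (X : Set Ordinal), b ∈ (Y : Set Ordinal) →
      (X : Set Ordinal) ∩ Iio b = (Y : Set Ordinal) ∩ Iio b

theorem inter_Iio_eq_of_subset_star_factors {X₁ X₂ X Y : M.mu}
    (hr : M.wfRank X₁ = M.wfRank X₂)
    (hseg : ∀ c ∈ (X₁ : Set Ordinal) ∩ X₂, (X₁ : Set Ordinal) ∩ Iio c = (X₂ : Set Ordinal) ∩ Iio c)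
    (hcoh : M.IsCoherentBelow X₁) (hX : (X : Set Ordinal) ⊆ X₁) (hY : (Y : Set Ordinal) ⊆ X₂)
    (hXY : M.wfRank X = M.wfRank Y) {b : Ordinal} (hbX : b ∈ (X : Set Ordinal))
    (hbY : b ∈ (Y : Set Ordinal)) :
    (X : Set Ordinal) ∩ Iio b = (Y : Set Ordinal) ∩ Iio b := by
  have hb : b ∈ (X₁ : Set Ordinal) ∩ X₂ := ⟨hX hbX, hY hbY⟩
  rcases hY.ssubset_or_eq with hYX₂ | hYX₂
  swap
  · obtain rfl : X = X₁ := eq_of_subset_of_wfRank_le hX (by rw [hXY, Subtype.ext hYX₂, hr])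
    rw [hYX₂]
    exact hseg b hb
  -- `Y` is the copy of some `U ⊂ X₁` under the transfer map, which fixes `X₁ ∩ X₂` pointwise
  obtain ⟨U, hUX₁, hUY⟩ := exists_image_omap_eq hr hYX₂
  have hfix : ∀ c ∈ (X₁ : Set Ordinal) ∩ X₂, c ∈ (Y : Set Ordinal) ↔ c ∈ (U : Set Ordinal) := by
    intro c hc
    rw [← hUY, ← (injOn_omap hr).mem_image_iff hUX₁.subset hc.1,
      omap_eq_self hc.2 (hseg c hc)]
  have hYU : (Y : Set Ordinal) ∩ Iio b = (U : Set Ordinal) ∩ Iio b := by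
    ext c
    refine ⟨fun ⟨hcY, hcb⟩ => ⟨?_, hcb⟩, fun ⟨hcU, hcb⟩ => ⟨?_, hcb⟩⟩
    · have hc : c ∈ (X₁ : Set Ordinal) ∩ Iio b := hseg b hb ▸ ⟨hY hcY, hcb⟩
      exact (hfix c ⟨hc.1, hY hcY⟩).1 hcY
    · have hc : c ∈ (X₂ : Set Ordinal) ∩ Iio b := hseg b hb ▸ ⟨hUX₁.subset hcU, hcb⟩
      exact (hfix c ⟨hUX₁.subset hcU, hc.1⟩).2 hcU
  rw [hYU]
  exact hcoh X U hX hUX₁.subset (hXY.trans (wfRank_image_omap hr hUX₁ hUY.symm)) b hbX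
    ((hfix b hb).1 hbY)

theorem isCoherentBelow (Z : M.mu) : M.IsCoherentBelow Z := by
  induction Z using M.wf.induction with | _ Z IH => ?_
  intro X Y hXZ hYZ hr b hbX hbY
  by_cases hXY : X = Y
  · rw [hXY]
  have hXZ' : (X : Set Ordinal) ⊂ Z := hXZ.ssubset_of_ne fun h =>
    hXY (eq_of_subset_of_wfRank_le (h ▸ hYZ) hr.le).symm
  have hYZ' : (Y : Set Ordinal) ⊂ Z := hYZ.ssubset_of_ne fun h =>
    hXY (eq_of_subset_of_wfRank_le (h ▸ hXZ) hr.ge)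
  rcases M.directed_or_star Z with hdir | ⟨X₁, X₂, hr₁₂, hstar, hX₁, hX₂, hsplit⟩
  · obtain ⟨W, hWZ, hXW, hYW⟩ := hdir X Y hXZ' hYZ'
    exact IH W hWZ X Y hXW hYW hr b hbX hbY
  have hne : ((X₁ : Set Ordinal) \ X₂).Nonempty := by
    rw [nonempty_iff_ne_empty, Ne, sdiff_eq_empty]
    intro h
    rw [hstar.2.1, union_eq_self_of_subset_left h] at hX₂
    exact hX₂.ne rfl
  have hseg := fun c (hc : c ∈ (X₁ : Set Ordinal) ∩ X₂) => hstar.inter_Iio_eq hne hc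
  rcases hsplit X hXZ' with hX | hX <;> rcases hsplit Y hYZ' with hY | hY
  · exact IH X₁ hX₁ X Y hX hY hr b hbX hbY
  · exact inter_Iio_eq_of_subset_star_factors hr₁₂ hseg (IH X₁ hX₁) hX hY hr hbX hbY
  · exact (inter_Iio_eq_of_subset_star_factors hr₁₂ hseg (IH X₁ hX₁) hY hX hr.symm hbY hbX).symm
  · exact IH X₂ hX₂ X Y hX hY hr b hbX hbY

theorem inter_Iio_eq_of_wfRank_eq {X Y : M.mu} (hr : M.wfRank X = M.wfRank Y) {b : Ordinal}
    (hbX : b ∈ (X : Set Ordinal)) (hbY : b ∈ (Y : Set Ordinal)) :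
    (X : Set Ordinal) ∩ Iio b = (Y : Set Ordinal) ∩ Iio b := by
  obtain ⟨Z, hZ, hXZ, hYZ⟩ := M.directed X X.2 Y Y.2
  exact isCoherentBelow ⟨Z, hZ⟩ X Y hXZ hYZ hr b hbX hbY

theorem exists_superset_mem_rank_le_max {a b : Ordinal} (hab : a < b) {X Y : M.mu}
    (haX : a ∈ (X : Set Ordinal)) (hbX : b ∈ (X : Set Ordinal)) (hbY : b ∈ (Y : Set Ordinal)) :
    ∃ W : M.mu, (Y : Set Ordinal) ⊆ W ∧ a ∈ (W : Set Ordinal) ∧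
      M.rank W ≤ max (M.rank X) (M.rank Y) := by
  have ha : ∀ W : M.mu, M.wfRank W = M.wfRank X → b ∈ (W : Set Ordinal) →
      a ∈ (W : Set Ordinal) := fun W hW hbW =>
    (inter_Iio_eq_of_wfRank_eq hW.symm hbX hbW ▸ ⟨haX, hab⟩ : a ∈ (W : Set Ordinal) ∩ Iio b).1
  rcases le_total (M.wfRank X) (M.wfRank Y) with hXY | hYX
  · obtain ⟨W, hWY, hbW, hW⟩ := exists_mem_wfRank_eq hbY hXY
    exact ⟨Y, subset_rfl, hWY (ha W hW hbW), le_max_right _ _⟩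
  · obtain ⟨Z, hZ, hXZ, hYZ⟩ := M.directed X X.2 Y Y.2
    obtain ⟨W, hYW, -, hW⟩ :=
      exists_wfRank_eq_of_subset (Z := ⟨Z, hZ⟩) hYZ hYX (wfRank_mono (Y := ⟨Z, hZ⟩) hXZ)
    exact ⟨W, hYW, ha W hW (hYW hbY), (congrArg olower hW).le.trans (le_max_left _ _)⟩

theorem mcol_comm (a b : Ordinal) : M.mcol a b = M.mcol b a := by
  unfold mcol
  congr 1
  ext ξ
  exact exists_congr fun X => and_congr_right' and_comm

theorem mcol_spec {a b : Ordinal} (ha : a < (Order.succ κ).ord) (hb : b < (Order.succ κ).ord) :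
    ∃ X : M.mu, M.rank X = M.mcol a b ∧ a ∈ (X : Set Ordinal) ∧ b ∈ (X : Set Ordinal) :=
  csInf_mem (s := {ξ | ∃ X : M.mu, M.rank X = ξ ∧ a ∈ (X : Set Ordinal) ∧ b ∈ (X : Set Ordinal)})
    (by obtain ⟨X, haX, hbX⟩ := exists_mem_pair ha hb; exact ⟨_, X, rfl, haX, hbX⟩)

theorem mcol_le {a b : Ordinal} {X : M.mu} (ha : a ∈ (X : Set Ordinal))
    (hb : b ∈ (X : Set Ordinal)) : M.mcol a b ≤ M.rank X :=
  csInf_le' ⟨X, rfl, ha, hb⟩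

theorem mcol_le_max_of_lt {a b c : Ordinal} (hab : a < b) (hb : b < (Order.succ κ).ord)
    (hc : c < (Order.succ κ).ord) : M.mcol a c ≤ max (M.mcol a b) (M.mcol b c) := by
  obtain ⟨X, hX, haX, hbX⟩ := M.mcol_spec (hab.trans hb) hb
  obtain ⟨Y, hY, hbY, hcY⟩ := M.mcol_spec hb hc
  obtain ⟨W, hYW, haW, hW⟩ := exists_superset_mem_rank_le_max hab haX hbX hbY
  calc M.mcol a c ≤ M.rank W := mcol_le haW (hYW hcY)
    _ ≤ max (M.mcol a b) (M.mcol b c) := hX ▸ hY ▸ hW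

theorem seq_rank_eq_inter_Iio (hκ : κ.IsRegular) {α : Ordinal} {X : M.mu}
    (hα : α ∈ (X : Set Ordinal)) : M.seq α (M.rank X) = (X : Set Ordinal) ∩ Iio α := by
  ext ξ
  refine ⟨?_, fun h => ⟨_, ⟨X, rfl, hα, rfl⟩, h⟩⟩
  rintro ⟨_, ⟨Y, hY, hαY, rfl⟩, hξ⟩
  rwa [inter_Iio_eq_of_wfRank_eq ((rank_eq_rank_iff hκ).1 hY) hαY hα] at hξ

theorem mk_seq_lt (hκ : κ.IsRegular) (α ξ : Ordinal) : #(M.seq α ξ) < Cardinal.lift.{1} κ := by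
  by_cases h : ∃ X : M.mu, M.rank X = ξ ∧ α ∈ (X : Set Ordinal)
  · obtain ⟨X, rfl, hα⟩ := h
    rw [M.seq_rank_eq_inter_Iio hκ hα]
    exact (mk_le_mk_of_subset inter_subset_left).trans_lt (mk_mem_lt X)
  · have : M.seq α ξ = ∅ := by
      rw [seq, sUnion_eq_empty]
      rintro _ ⟨X, hX, hα, -⟩
      exact absurd ⟨X, hX, hα⟩ h
    rw [this, Cardinal.mk_eq_zero]
    exact hκ.lift.pos

theorem mem_seq_mcol {ξ α : Ordinal} (hξα : ξ < α) (hα : α < (Order.succ κ).ord) :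
    ξ ∈ M.seq α (M.mcol ξ α) := by
  obtain ⟨X, hX, hξX, hαX⟩ := M.mcol_spec (hξα.trans hα) hα
  exact ⟨_, ⟨X, hX, hαX, rfl⟩, hξX, hξα⟩

theorem mk_setOf_mcol_le_lt (hκ : κ.IsRegular) {α ν : Ordinal} (hα : α < (Order.succ κ).ord)
    (hν : ν < κ.ord) : #{ξ | ξ < α ∧ M.mcol ξ α ≤ ν} < Cardinal.lift.{1} κ := by
  have hIic : #(Iic ν) < Cardinal.lift.{1} κ := by
    rw [← Order.Iio_succ, Cardinal.mk_Iio_ordinal, Cardinal.lift_lt, ← Cardinal.lt_ord]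
    exact (Cardinal.isSuccLimit_ord hκ.aleph0_le).succ_lt hν
  refine (mk_le_mk_of_subset fun ξ (hξ : ξ < α ∧ M.mcol ξ α ≤ ν) =>
    mem_biUnion (show M.mcol ξ α ∈ Iic ν from hξ.2) (M.mem_seq_mcol hξ.1 hα)).trans_lt ?_
  exact (Cardinal.card_biUnion_lt_iff_forall_of_isRegular hκ.lift hIic).2
    fun η _ => M.mk_seq_lt hκ α η

end TwoCardinal

/-- Basic properties of the μ-coloring: fibers below a fixed colour are small, and the two
subadditivity inequalities hold. -/
theorem mcol_basic (κ : Cardinal) (hκ : κ.IsRegular) (M : TwoCardinal κ)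
    (α β γ : Ordinal) (hαβ : α < β) (hβγ : β < γ) (hγ : γ < (Order.succ κ).ord)
    (ν : Ordinal) (hν : ν < κ.ord) :
    (otp {ξ | ξ < α ∧ M.mcol ξ α ≤ ν}).card < κ ∧
    M.mcol α γ ≤ max (M.mcol α β) (M.mcol β γ) ∧
    M.mcol α β ≤ max (M.mcol α γ) (M.mcol β γ) := by
  have hβ := hβγ.trans hγ
  refine ⟨?_, M.mcol_le_max_of_lt hαβ hβ hγ, ?_⟩
  · rw [← Cardinal.lift_lt.{0, 1}, lift_card_otp ⟨α, fun ξ hξ => hξ.1.le⟩]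
    exact M.mk_setOf_mcol_le_lt hκ (hαβ.trans hβ) hν
  · simpa only [M.mcol_comm γ β] using M.mcol_le_max_of_lt (hαβ.trans hβγ) hγ hβ
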